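/- Under the hypotheses of the sharp dual Chernoff-Ou-Pan inequality with 0 ≤ λ < k/π (k ≥ 2 integer, and a_n = b_n = 0 whenever n/k is an even integer), equality in ∫_0^{π/k} ρ_k(S,θ) ρ_k(S,θ+π/k) dθ ≤ kA(S) + λ(Ã(S,B)² − πA(S)) holds if and only if ρ(S,·) is constant, i.e., S is a disc centered at the origin. -/

import Mathlib

/-
Because the Fourier coefficients of `ρ` vanish at the nonzero multiples of `2k`, the function
`ρ_{2k}(θ) = ρ_k(θ) + ρ_k(θ + π/k)` is constant: it is invariant under rotation by `π/k`, which
kills every harmonic not divisible by `2k`, while its harmonics divisible by `2k` are sums of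
those of rotated copies of `ρ`, which vanish. Writing `c` for that constant, `c · π/k = ∫ ρ = 2Ã`,
the integrand is `ρ_k (c - ρ_k)`, and Cauchy–Schwarz on `[0, π/k]` gives
`(π/k) ∫ ρ_k ρ_k(· + π/k) ≤ Ã²`. Together with Cauchy–Schwarz `Ã² ≤ πA` on `[0, 2π]` and
`λπ/k < 1`, equality forces `Ã² = πA`, the equality case of Cauchy–Schwarz, so `ρ` is constant.
-/

open Real Finset MeasureTheory Function

theorem Finset.sum_range_two_mul {M : Type*} [AddCommMonoid M] (f : ℕ → M) (n : ℕ) :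
    ∑ i ∈ range (2 * n), f i = ∑ i ∈ range n, f (2 * i) + ∑ i ∈ range n, f (2 * i + 1) := by
  induction n with
  | zero => simp
  | succ n ih =>
    rw [Nat.mul_succ, sum_range_succ, sum_range_succ, ih, sum_range_succ, sum_range_succ]
    abel

theorem intervalIntegral.sum_integral_comp_add_nat_mul {f : ℝ → ℝ} (hf : Continuous f) (h : ℝ)
    (N : ℕ) : ∑ m ∈ range N, ∫ x in 0..h, f (x + m * h) = ∫ x in 0..N * h, f x := by
  have hadj := intervalIntegral.sum_integral_adjacent_intervals (μ := volume) (f := f)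
    (a := fun m : ℕ => m * h) (n := N) fun m _ => hf.intervalIntegrable _ _
  simp only [Nat.cast_zero, zero_mul, Nat.cast_succ] at hadj
  rw [← hadj]
  refine sum_congr rfl fun m _ => ?_
  rw [intervalIntegral.integral_comp_add_right]
  congr 1 <;> ring

theorem Function.Periodic.eq_of_forall_mem_Icc {f : ℝ → ℝ} {T c : ℝ} (hf : Periodic f T)
    (hT : 0 < T) (h : ∀ x ∈ Set.Icc 0 T, f x = c) (x : ℝ) : f x = c := by
  obtain ⟨y, hy, hxy⟩ := hf.exists_mem_Ico₀ hT x
  rw [hxy, h y (Set.Ico_subset_Icc_self hy)]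

section CauchySchwarz

variable {f : ℝ → ℝ} {a b : ℝ}

theorem intervalIntegral.integral_sub_const_sq (hf : Continuous f) (c : ℝ) :
    ∫ x in a..b, (f x - c) ^ 2 =
      (∫ x in a..b, f x ^ 2) - 2 * c * (∫ x in a..b, f x) + c ^ 2 * (b - a) := by
  have hexpand : ∀ x, (f x - c) ^ 2 = f x ^ 2 - 2 * c * f x + c ^ 2 := fun x => by ring
  simp_rw [hexpand]
  rw [integral_add, integral_sub, integral_const_mul, integral_const, smul_eq_mul]
  · ring
  all_goals exact Continuous.intervalIntegrable (by fun_prop) _ _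

theorem intervalIntegral.mul_integral_sub_average_sq (hf : Continuous f) (hab : a ≠ b) :
    (b - a) * ∫ x in a..b, (f x - (∫ x in a..b, f x) / (b - a)) ^ 2 =
      (b - a) * (∫ x in a..b, f x ^ 2) - (∫ x in a..b, f x) ^ 2 := by
  have : b - a ≠ 0 := sub_ne_zero.mpr hab.symm
  rw [integral_sub_const_sq hf]
  generalize ∫ x in a..b, f x = I
  generalize ∫ x in a..b, f x ^ 2 = J
  field_simp
  ring

theorem intervalIntegral.sq_integral_le_mul_integral_sq (hf : Continuous f) (hab : a ≤ b) :
    (∫ x in a..b, f x) ^ 2 ≤ (b - a) * ∫ x in a..b, f x ^ 2 := by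
  rcases hab.eq_or_lt with rfl | hlt
  · simp
  have hnn : 0 ≤ ∫ x in a..b, (f x - (∫ x in a..b, f x) / (b - a)) ^ 2 :=
    integral_nonneg hab fun x _ => sq_nonneg _
  nlinarith [mul_integral_sub_average_sq hf hlt.ne, mul_nonneg (sub_nonneg.mpr hab) hnn]

theorem intervalIntegral.eq_average_of_sq_integral_eq (hf : Continuous f) (hab : a < b)
    (heq : (∫ x in a..b, f x) ^ 2 = (b - a) * ∫ x in a..b, f x ^ 2) :
    ∀ x ∈ Set.Icc a b, f x = (∫ x in a..b, f x) / (b - a) := by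
  set c := (∫ x in a..b, f x) / (b - a)
  have hzero : ∫ x in a..b, (f x - c) ^ 2 = 0 := by
    have : (b - a) * ∫ x in a..b, (f x - c) ^ 2 = 0 := by
      rw [mul_integral_sub_average_sq hf hab.ne, heq, sub_self]
    exact (mul_eq_zero.mp this).resolve_left (sub_pos.mpr hab).ne'
  by_contra! hne
  obtain ⟨x, hx, hfx⟩ := hne
  have hfx' : f x - c ≠ 0 := sub_ne_zero.mpr hfx
  refine (integral_pos hab (by fun_prop) (fun y _ => sq_nonneg _) ⟨x, hx, by positivity⟩).ne' hzero

theorem intervalIntegral.mul_integral_mul_sub_le (hf : Continuous f) (hab : a ≤ b) (c : ℝ) :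
    (b - a) * ∫ x in a..b, f x * (c - f x) ≤ (c * (b - a) / 2) ^ 2 := by
  have hsplit : ∫ x in a..b, f x * (c - f x) =
      c * (∫ x in a..b, f x) - ∫ x in a..b, f x ^ 2 := by
    have hexpand : ∀ x, f x * (c - f x) = c * f x - f x ^ 2 := fun x => by ring
    simp_rw [hexpand]
    rw [integral_sub, integral_const_mul]
    all_goals exact Continuous.intervalIntegrable (by fun_prop) _ _
  rw [hsplit]
  nlinarith [sq_integral_le_mul_integral_sq hf hab, sq_nonneg (c * (b - a) / 2 - ∫ x in a..b, f x)]

end CauchySchwarz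

section Fourier

variable {T : ℝ} [Fact (0 < T)]

omit [Fact (0 < T)] in
theorem fourier_add_apply (n : ℤ) (x y : AddCircle T) :
    fourier n (x + y) = fourier n x * fourier n y := by
  simp only [fourier_apply, smul_add, AddCircle.toCircle_add, Circle.coe_mul]

variable {E : Type*} [NormedAddCommGroup E] [NormedSpace ℂ E]

theorem fourierCoeff_comp_add_right (f : AddCircle T → E) (s : AddCircle T) (n : ℤ) :
    fourierCoeff (fun x => f (x + s)) n = fourier n s • fourierCoeff f n := by
  have hphase : ∀ u, fourier (-n) (u - s) = fourier (-n) u * fourier n s := fun u => by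
    rw [sub_eq_add_neg, fourier_add_apply]
    simp only [fourier_apply, neg_smul, smul_neg, neg_neg]
  calc fourierCoeff (fun x => f (x + s)) n
      = ∫ x, fourier (-n) (x + s - s) • f (x + s) ∂AddCircle.haarAddCircle := by
        simp only [fourierCoeff, add_sub_cancel_right]
    _ = ∫ x, fourier (-n) (x - s) • f x ∂AddCircle.haarAddCircle :=
        integral_add_right_eq_self (fun x => fourier (-n) (x - s) • f x) s
    _ = fourier n s • fourierCoeff f n := by
        simp only [hphase, mul_smul, smul_comm (fourier (-n) _) (fourier n s)]
        exact integral_smul _ _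

theorem fourierCoeff_eq_zero_of_forall_add_eq {f : AddCircle T → E} {s : AddCircle T}
    (hf : ∀ x, f (x + s) = f x) {n : ℤ} (hn : fourier n s ≠ 1) : fourierCoeff f n = 0 := by
  have h := fourierCoeff_comp_add_right f s n
  simp only [hf] at h
  have : (fourier n s - 1) • fourierCoeff f n = 0 := by rw [sub_smul, ← h, one_smul, sub_self]
  exact (smul_eq_zero.mp this).resolve_left (sub_ne_zero.mpr hn)

theorem ContinuousMap.eq_fourierCoeff_zero_of_forall_ne_zero (f : C(AddCircle T, ℂ))
    (hf : ∀ n ≠ 0, fourierCoeff f n = 0) (x : AddCircle T) : f x = fourierCoeff f 0 := by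
  have hsum : Summable (fourierCoeff f) :=
    summable_of_ne_finset_zero (s := {0}) fun n hn => hf n (by simpa using hn)
  refine (has_pointwise_sum_fourier_series_of_summable hsum x).unique ?_
  simpa using hasSum_single (f := fun n => fourierCoeff f n • fourier n x) 0
    fun n hn => by rw [hf n hn, zero_smul]

theorem AddCircle.natCast_dvd_of_fourier_coe_div_eq_one {N : ℕ}
    (hN : N ≠ 0) {n : ℤ} (h : fourier n ((T / N : ℝ) : AddCircle T) = 1) : (N : ℤ) ∣ n := by
  rw [fourier_coe_apply] at h
  obtain ⟨j, hj⟩ := Complex.exp_eq_one_iff.mp h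
  have hT' : (T : ℂ) ≠ 0 := by exact_mod_cast (Fact.out : 0 < T).ne'
  have hN' : (N : ℂ) ≠ 0 := by exact_mod_cast hN
  push_cast at hj
  field_simp at hj
  exact ⟨j, by exact_mod_cast hj⟩

end Fourier

instance factTwoPiPos : Fact (0 < 2 * π) := ⟨two_pi_pos⟩

def circleLift {f : ℝ → ℝ} {T : ℝ} (hp : Periodic f T) (hf : Continuous f) :
    C(AddCircle T, ℂ) :=
  ⟨fun x => (hp.lift x : ℂ), by
    rw [continuous_coinduced_dom]; exact Complex.continuous_ofReal.comp hf⟩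

@[simp]
theorem circleLift_coe {f : ℝ → ℝ} {T : ℝ} (hp : Periodic f T) (hf : Continuous f) (x : ℝ) :
    circleLift hp hf x = f x :=
  rfl

theorem fourierCoeff_circleLift {f : ℝ → ℝ} (hp : Periodic f (2 * π)) (hf : Continuous f)
    (n : ℤ) :
    fourierCoeff (circleLift hp hf) n = (1 / (2 * π)) •
      ((∫ x in 0..2 * π, f x * cos (n * x) : ℝ) -
        (∫ x in 0..2 * π, f x * sin (n * x) : ℝ) * Complex.I) := by
  have hpt : ∀ x : ℝ, fourier (-n) (x : AddCircle (2 * π)) • circleLift hp hf x =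
      ((f x * cos (n * x) : ℝ) : ℂ) - ((f x * sin (n * x) : ℝ) : ℂ) * Complex.I := fun x => by
    have : 2 * π * Complex.I * ((-n : ℤ) : ℂ) * x / (2 * π : ℝ) =
        ((-(n * x) : ℝ) : ℂ) * Complex.I := by
      push_cast; field_simp
    rw [fourier_coe_apply, this, Complex.exp_mul_I, circleLift_coe, smul_eq_mul,
      ← Complex.ofReal_cos, ← Complex.ofReal_sin, cos_neg, sin_neg]
    push_cast; ring
  rw [fourierCoeff_eq_intervalIntegral _ n 0, zero_add,
    intervalIntegral.integral_congr fun x _ => hpt x, intervalIntegral.integral_sub,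
    intervalIntegral.integral_mul_const, intervalIntegral.integral_ofReal,
    intervalIntegral.integral_ofReal]
  all_goals exact Continuous.intervalIntegrable (by fun_prop) _ _

theorem fourierCoeff_circleLift_eq_zero {f : ℝ → ℝ} (hp : Periodic f (2 * π))
    (hf : Continuous f) {n : ℤ} (hcos : ∫ x in 0..2 * π, f x * cos (n.natAbs * x) = 0)
    (hsin : ∫ x in 0..2 * π, f x * sin (n.natAbs * x) = 0) :
    fourierCoeff (circleLift hp hf) n = 0 := by
  rw [fourierCoeff_circleLift]
  obtain ⟨p, rfl | rfl⟩ := Int.eq_nat_or_neg n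
  · simp_all
  · simp_all [neg_mul, intervalIntegral.integral_neg]

-- The paper's `ρ_k(S, ·)`.
noncomputable def rotationSum (ρ : ℝ → ℝ) (k : ℕ) (θ : ℝ) : ℝ :=
  ∑ m ∈ range k, ρ (θ + 2 * m * π / k)

theorem rotationSum_add_rotationSum_add_pi_div (ρ : ℝ → ℝ) (k : ℕ) (θ : ℝ) :
    rotationSum ρ k θ + rotationSum ρ k (θ + π / k) = rotationSum ρ (2 * k) θ := by
  unfold rotationSum
  rw [sum_range_two_mul]
  congr 1 <;> exact sum_congr rfl fun m _ => by push_cast; ring_nf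

section RotationSum

variable {ρ : ℝ → ℝ}

theorem Continuous.rotationSum (hρ : Continuous ρ) (k : ℕ) : Continuous (rotationSum ρ k) := by
  unfold _root_.rotationSum; fun_prop

theorem Function.Periodic.rotationSum (hρ : Periodic ρ (2 * π)) {k : ℕ} (hk : k ≠ 0) :
    Periodic (rotationSum ρ k) (2 * π / k) := by
  intro θ
  obtain ⟨k, rfl⟩ := Nat.exists_eq_succ_of_ne_zero hk
  unfold _root_.rotationSum
  conv_rhs => rw [sum_range_succ']
  rw [sum_range_succ]
  congr 1
  · exact sum_congr rfl fun m _ => by push_cast; ring_nf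
  · rw [Nat.cast_zero, mul_zero, zero_mul, zero_div, add_zero, ← hρ θ]
    congr 1; push_cast; field_simp; ring

theorem integral_rotationSum (hρ : Continuous ρ) {k : ℕ} (hk : k ≠ 0) :
    ∫ θ in 0..2 * π / k, rotationSum ρ k θ = ∫ θ in 0..2 * π, ρ θ := by
  unfold rotationSum
  rw [intervalIntegral.integral_finsetSum fun m _ =>
    Continuous.intervalIntegrable (by fun_prop) _ _]
  have hk' : (k : ℝ) ≠ 0 := by exact_mod_cast hk
  simp_rw [show ∀ θ (m : ℕ), θ + 2 * m * π / k = θ + m * (2 * π / k) from fun θ m => by ring,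
    intervalIntegral.sum_integral_comp_add_nat_mul hρ, mul_div_cancel₀ _ hk']

theorem rotationSum_eq_rotationSum_zero_of_fourier_eq_zero (hρ : Continuous ρ)
    (hper : Periodic ρ (2 * π)) {N : ℕ} (hN : N ≠ 0)
    (hvan : ∀ n : ℕ, 0 < n → N ∣ n →
      ∫ x in 0..2 * π, ρ x * cos (n * x) = 0 ∧ ∫ x in 0..2 * π, ρ x * sin (n * x) = 0)
    (θ : ℝ) : rotationSum ρ N θ = rotationSum ρ N 0 := by
  have hN' : (N : ℝ) ≠ 0 := by exact_mod_cast hN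
  set R := circleLift hper hρ
  have hperN : Periodic (rotationSum ρ N) (2 * π) := by
    simpa [mul_div_cancel₀ _ hN'] using (hper.rotationSum hN).nat_mul N
  set G := circleLift hperN (hρ.rotationSum N)
  have hGR : ⇑G = ∑ m ∈ range N, fun y => R (y + ((2 * m * π / N : ℝ) : AddCircle (2 * π))) := by
    ext y
    induction y using QuotientAddGroup.induction_on with | H x =>
    simp only [G, R, circleLift_coe, rotationSum, Finset.sum_apply, ← AddCircle.coe_add]
    push_cast; rfl
  have hGshift : ∀ y, G (y + ((2 * π / N : ℝ) : AddCircle (2 * π))) = G y := by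
    intro y
    induction y using QuotientAddGroup.induction_on with | H x =>
    rw [← AddCircle.coe_add]
    simp only [G, circleLift_coe, hper.rotationSum hN x]
  have hcoeff : ∀ n ≠ 0, fourierCoeff G n = 0 := by
    intro n hn
    by_cases hphase : fourier n ((2 * π / N : ℝ) : AddCircle (2 * π)) = 1
    · have hR : fourierCoeff R n = 0 := by
        have hdvd := AddCircle.natCast_dvd_of_fourier_coe_div_eq_one hN hphase
        obtain ⟨hc, hs⟩ := hvan n.natAbs (Int.natAbs_pos.mpr hn) (Int.natCast_dvd.mp hdvd)
        exact fourierCoeff_circleLift_eq_zero hper hρ hc hs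
      rw [hGR, fourierCoeff.sum _ _ fun m _ => (map_continuous R).integrable_of_hasCompactSupport
        (HasCompactSupport.of_compactSpace _) |>.comp_add_right _]
      rw [Finset.sum_apply]
      exact sum_eq_zero fun m _ => by rw [fourierCoeff_comp_add_right, hR, smul_zero]
    · exact fourierCoeff_eq_zero_of_forall_add_eq hGshift hphase
  have h := congrArg Complex.re ((G.eq_fourierCoeff_zero_of_forall_ne_zero hcoeff θ).trans
    (G.eq_fourierCoeff_zero_of_forall_ne_zero hcoeff ((0 : ℝ) : AddCircle (2 * π))).symm)
  simpa only [G, circleLift_coe, Complex.ofReal_re] using h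

theorem mul_integral_rotationSum_mul_rotationSum_add_le (hρ : Continuous ρ)
    (hper : Periodic ρ (2 * π)) {k : ℕ} (hk : k ≠ 0)
    (hvan : ∀ n : ℕ, 0 < n → 2 * k ∣ n →
      ∫ x in 0..2 * π, ρ x * cos (n * x) = 0 ∧ ∫ x in 0..2 * π, ρ x * sin (n * x) = 0) :
    π / k * ∫ θ in 0..π / k, rotationSum ρ k θ * rotationSum ρ k (θ + π / k) ≤
      ((1 / 2) * ∫ θ in 0..2 * π, ρ θ) ^ 2 := by
  have h2k : 2 * k ≠ 0 := by positivity
  have hconst := rotationSum_eq_rotationSum_zero_of_fourier_eq_zero hρ hper h2k hvan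
  set c := rotationSum ρ (2 * k) 0
  have hshift : ∀ θ, rotationSum ρ k (θ + π / k) = c - rotationSum ρ k θ := fun θ => by
    rw [← hconst θ, ← rotationSum_add_rotationSum_add_pi_div]; ring
  have hmean : c * (π / k) = ∫ θ in 0..2 * π, ρ θ := by
    have hperiod : 2 * π / ((2 * k : ℕ) : ℝ) = π / k := by push_cast; field_simp
    rw [← integral_rotationSum hρ h2k, hperiod, intervalIntegral.integral_congr fun θ _ => hconst θ,
      intervalIntegral.integral_const, smul_eq_mul, sub_zero, mul_comm]
  calc π / k * ∫ θ in 0..π / k, rotationSum ρ k θ * rotationSum ρ k (θ + π / k)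
      = (π / k - 0) * ∫ θ in 0..π / k, rotationSum ρ k θ * (c - rotationSum ρ k θ) := by
        simp_rw [hshift, sub_zero]
    _ ≤ (c * (π / k - 0) / 2) ^ 2 :=
        intervalIntegral.mul_integral_mul_sub_le (hρ.rotationSum k) (by positivity) c
    _ = ((1 / 2) * ∫ θ in 0..2 * π, ρ θ) ^ 2 := by rw [sub_zero, ← hmean]; ring

end RotationSum

theorem sharp_dual_chernoff_ou_pan_equality_small_lambda_general (ρ : ℝ → ℝ) (a b : ℕ → ℝ)
    (hρ : Continuous ρ) (hper : ∀ θ, ρ (θ + 2 * π) = ρ θ)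
    (ha : ∀ n : ℕ, a n = (1 / π) * ∫ θ in (0:ℝ)..(2 * π), ρ θ * Real.cos (n * θ))
    (hb : ∀ n : ℕ, b n = (1 / π) * ∫ θ in (0:ℝ)..(2 * π), ρ θ * Real.sin (n * θ))
    (k : ℕ) (hk : 2 ≤ k)
    (hvan : ∀ n : ℕ, 0 < n → k ∣ n → Even (n / k) → a n = 0 ∧ b n = 0)
    (lam : ℝ) (hlam1 : lam < (k : ℝ) / π) :
    ((∫ θ in (0:ℝ)..(π / k),
        (∑ m ∈ Finset.range k, ρ (θ + 2 * (m:ℝ) * π / k)) *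
        (∑ m ∈ Finset.range k, ρ (θ + π / k + 2 * (m:ℝ) * π / k)))
      = (k : ℝ) * ((1 / 2) * ∫ θ in (0:ℝ)..(2 * π), (ρ θ) ^ 2) +
        lam * (((1 / 2) * ∫ θ in (0:ℝ)..(2 * π), ρ θ) ^ 2 -
               π * ((1 / 2) * ∫ θ in (0:ℝ)..(2 * π), (ρ θ) ^ 2)))
    ↔ ∃ c : ℝ, ∀ θ, ρ θ = c := by
  change (∫ θ in 0..π / k, rotationSum ρ k θ * rotationSum ρ k (θ + π / k)) = _ ↔ _
  have hk0 : (0 : ℝ) < k := by positivity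
  have hvan' : ∀ n : ℕ, 0 < n → 2 * k ∣ n →
      ∫ x in 0..2 * π, ρ x * cos (n * x) = 0 ∧ ∫ x in 0..2 * π, ρ x * sin (n * x) = 0 := by
    rintro n hn ⟨j, rfl⟩
    have hdiv : 2 * k * j / k = 2 * j := by
      rw [mul_comm 2 k, mul_assoc, Nat.mul_div_cancel_left _ (by omega)]
    have := hvan _ hn (Dvd.intro (2 * j) (by ring)) (hdiv ▸ even_two_mul j)
    simpa [ha, hb, pi_ne_zero] using this
  constructor
  · intro heq
    have hbound := mul_integral_rotationSum_mul_rotationSum_add_le hρ hper (by omega) hvan'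
    have hcs := intervalIntegral.sq_integral_le_mul_integral_sq hρ two_pi_pos.le
    have hlam : lam * (π / k) < 1 := by
      rwa [← lt_div_iff₀ (by positivity), one_div_div]
    have hkk : π / k * k = π := div_mul_cancel₀ _ hk0.ne'
    rw [heq, mul_add, ← mul_assoc, hkk] at hbound
    have hequal : (∫ θ in 0..2 * π, ρ θ) ^ 2 = (2 * π - 0) * ∫ θ in 0..2 * π, ρ θ ^ 2 := by
      generalize ∫ θ in 0..2 * π, ρ θ = A at *
      generalize ∫ θ in 0..2 * π, ρ θ ^ 2 = B at *
      nlinarith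
    have hmean := intervalIntegral.eq_average_of_sq_integral_eq hρ two_pi_pos hequal
    exact ⟨_, Periodic.eq_of_forall_mem_Icc hper two_pi_pos hmean⟩
  · rintro ⟨c, hc⟩
    simp only [rotationSum, hc, sum_const, card_range, nsmul_eq_mul,
      intervalIntegral.integral_const, smul_eq_mul]
    field_simp
    ring

theorem sharp_dual_chernoff_ou_pan_equality_small_lambda (ρ : ℝ → ℝ) (a b : ℕ → ℝ)
    (hρ : Continuous ρ) (hpos : ∀ θ, 0 < ρ θ) (hper : ∀ θ, ρ (θ + 2 * π) = ρ θ)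
    (ha : ∀ n : ℕ, a n = (1 / π) * ∫ θ in (0:ℝ)..(2 * π), ρ θ * Real.cos (n * θ))
    (hb : ∀ n : ℕ, b n = (1 / π) * ∫ θ in (0:ℝ)..(2 * π), ρ θ * Real.sin (n * θ))
    (k : ℕ) (hk : 2 ≤ k)
    (hvan : ∀ n : ℕ, 0 < n → k ∣ n → Even (n / k) → a n = 0 ∧ b n = 0)
    (lam : ℝ) (hlam0 : 0 ≤ lam) (hlam1 : lam < (k : ℝ) / π) :
    ((∫ θ in (0:ℝ)..(π / k),
        (∑ m ∈ Finset.range k, ρ (θ + 2 * (m:ℝ) * π / k)) *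
        (∑ m ∈ Finset.range k, ρ (θ + π / k + 2 * (m:ℝ) * π / k)))
      = (k : ℝ) * ((1 / 2) * ∫ θ in (0:ℝ)..(2 * π), (ρ θ) ^ 2) +
        lam * (((1 / 2) * ∫ θ in (0:ℝ)..(2 * π), ρ θ) ^ 2 -
               π * ((1 / 2) * ∫ θ in (0:ℝ)..(2 * π), (ρ θ) ^ 2)))
    ↔ ∃ c : ℝ, ∀ θ, ρ θ = c :=
  sharp_dual_chernoff_ou_pan_equality_small_lambda_general ρ a b hρ hper ha hb k hk hvan lam hlam1
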